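/- For any finite multiset A of nonnegative reals and any positive integer k, Ψ_{k+1}(A) ≥ Ψ_k(A)·L(A), where L(A) is the sum of elements of A. -/

import Mathlib

/-!
Since `Ψ_k = k! · h_k` with `h_k` the complete homogeneous symmetric polynomial, the claim is
`h_k · L ≤ (k + 1) · h_{k+1}`: expanding `h_k · L`, each monomial of degree `k + 1` is produced at
most once per distinct variable it contains, hence at most `k + 1` times. In the double induction on
`k` and the list through `h_{k+1}(x :: l) = x · h_k(x :: l) + h_{k+1}(l)`, the only extra input is
that `h_{k+1}` does not decrease when a nonnegative element is added to the list.
-/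

/-- Complete homogeneous symmetric polynomial of degree `k` in the elements of `l`. -/
def hpoly : ℕ → List ℝ → ℝ
  | 0, _ => 1
  | _ + 1, [] => 0
  | k + 1, x :: l => x * hpoly k (x :: l) + hpoly (k + 1) l
termination_by k l => (k, l.length)

/-- `Ψ_k(A) = k! · h_k(A)`. -/
noncomputable def Psi (k : ℕ) (l : List ℝ) : ℝ := (Nat.factorial k : ℝ) * hpoly k l

@[simp]
lemma hpoly_zero (l : List ℝ) : hpoly 0 l = 1 := by
  rw [hpoly]

@[simp]
lemma hpoly_succ_nil (k : ℕ) : hpoly (k + 1) [] = 0 := by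
  rw [hpoly]

lemma hpoly_succ_cons (k : ℕ) (x : ℝ) (l : List ℝ) :
    hpoly (k + 1) (x :: l) = x * hpoly k (x :: l) + hpoly (k + 1) l := by
  rw [hpoly]

lemma hpoly_one (l : List ℝ) : hpoly 1 l = l.sum := by
  induction l with
  | nil => simp
  | cons x l ih => rw [hpoly_succ_cons, ih]; simp

lemma hpoly_nonneg (k : ℕ) {l : List ℝ} (hl : ∀ x ∈ l, 0 ≤ x) : 0 ≤ hpoly k l := by
  induction k generalizing l with
  | zero => simp
  | succ k ihk =>
    induction l with
    | nil => simp
    | cons x l ihl =>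
      have hx : 0 ≤ x := hl x List.mem_cons_self
      have hxl := ihk hl
      have htail := ihl fun y hy => hl y (List.mem_cons_of_mem _ hy)
      rw [hpoly_succ_cons]
      positivity

lemma hpoly_succ_le_hpoly_succ_cons (k : ℕ) {x : ℝ} {l : List ℝ}
    (hl : ∀ y ∈ x :: l, 0 ≤ y) : hpoly (k + 1) l ≤ hpoly (k + 1) (x :: l) := by
  rw [hpoly_succ_cons]
  have := mul_nonneg (hl x List.mem_cons_self) (hpoly_nonneg k hl)
  linarith

theorem hpoly_mul_sum_le (k : ℕ) {l : List ℝ} (hl : ∀ x ∈ l, 0 ≤ x) :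
    hpoly k l * l.sum ≤ (k + 1) * hpoly (k + 1) l := by
  induction k generalizing l with
  | zero => simp [hpoly_one]
  | succ k ihk =>
    induction l with
    | nil => simp
    | cons x l ihl =>
      have hx : 0 ≤ x := hl x List.mem_cons_self
      have htail : ∀ y ∈ l, 0 ≤ y := fun y hy => hl y (List.mem_cons_of_mem _ hy)
      have hxl : x * (hpoly k (x :: l) * (x + l.sum)) ≤ x * ((k + 1) * hpoly (k + 1) (x :: l)) :=
        mul_le_mul_of_nonneg_left (by simpa using ihk hl) hx
      have hmono : x * hpoly (k + 1) l ≤ x * hpoly (k + 1) (x :: l) :=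
        mul_le_mul_of_nonneg_left (hpoly_succ_le_hpoly_succ_cons k hl) hx
      have hl_sum := ihl htail
      rw [List.sum_cons, hpoly_succ_cons (k + 1)]
      nth_rw 1 [hpoly_succ_cons k]
      push_cast at hl_sum ⊢
      linear_combination hxl + hmono + hl_sum

theorem Psi_mul_sum_le (k : ℕ) {l : List ℝ} (hl : ∀ x ∈ l, 0 ≤ x) :
    Psi k l * l.sum ≤ Psi (k + 1) l := by
  have hfac : (0 : ℝ) ≤ k.factorial := by positivity
  calc Psi k l * l.sum = k.factorial * (hpoly k l * l.sum) := by rw [Psi, mul_assoc]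
    _ ≤ k.factorial * ((k + 1) * hpoly (k + 1) l) :=
        mul_le_mul_of_nonneg_left (hpoly_mul_sum_le k hl) hfac
    _ = Psi (k + 1) l := by rw [Psi, Nat.factorial_succ]; push_cast; ring

theorem stmt_14_general (l : List ℝ) (hl : ∀ x ∈ l, 0 ≤ x) (k : ℕ) :
    Psi (k + 1) l ≥ Psi k l * l.sum :=
  Psi_mul_sum_le k hl

theorem stmt_14 (l : List ℝ) (hl : ∀ x ∈ l, 0 ≤ x) (k : ℕ) (hk : 1 ≤ k) :
    Psi (k + 1) l ≥ Psi k l * l.sum :=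
  stmt_14_general l hl k
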